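/- For every alternating (p+1)-form ω ∈ ⋀^{p+1} T*, the graph graph(ω) := {(X, −ι_X ω) : X ∈ T} is a Lagrangian subspace of E^p; in particular it is isotropic. -/

import Mathlib

/-! Since `ι_X ι_Y ω = -ι_Y ι_X ω`, the pairing of `(Y, β)` with `(X, -ι_X ω)` is `ι_X (β + ι_Y ω)`.
It vanishes for every graph element exactly when `β + ι_Y ω` has all contractions zero, i.e. when
`β = -ι_Y ω`. -/

open Module

/-- `E^p` for `p = q+1`: the vector space `T ⊕ ⋀^{q+1} T*`. -/
abbrev EP (T : Type) [AddCommGroup T] [Module ℝ T] (q : ℕ) :=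
  T × (T [⋀^Fin (q+1)]→ₗ[ℝ] ℝ)

variable {T : Type} [AddCommGroup T] [Module ℝ T]

/-- The `⋀^q T*`-valued pairing on `E^{q+1}`: `⟨(X,α),(Y,β)⟩ = ι_X β + ι_Y α`. -/
noncomputable def pairing {q : ℕ} (e₁ e₂ : EP T q) : T [⋀^Fin q]→ₗ[ℝ] ℝ :=
  e₂.2.curryLeft e₁.1 + e₁.2.curryLeft e₂.1

def orthSet {q : ℕ} (L : Set (EP T q)) : Set (EP T q) :=
  {e | ∀ l ∈ L, pairing e l = 0}

def IsIsotropic {q : ℕ} (L : Set (EP T q)) : Prop :=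
  ∀ e₁ ∈ L, ∀ e₂ ∈ L, pairing e₁ e₂ = 0

namespace AlternatingMap

variable {R M N : Type*} [CommRing R] [AddCommGroup M] [Module R M] [AddCommGroup N] [Module R N]
  {n : ℕ}

theorem curryLeft_neg (f : M [⋀^Fin (n + 1)]→ₗ[R] N) : (-f).curryLeft = -f.curryLeft :=
  map_neg curryLeftLinearMap f

theorem curryLeft_curryLeft_swap (f : M [⋀^Fin (n + 2)]→ₗ[R] N) (x y : M) :
    (f.curryLeft x).curryLeft y = -(f.curryLeft y).curryLeft x := by
  have h := f.curryLeft_same (x + y)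
  simp only [map_add, curryLeft_add, LinearMap.add_apply, curryLeft_same, zero_add,
    add_zero] at h
  exact eq_neg_of_add_eq_zero_right h

theorem curryLeft_injective :
    Function.Injective (curryLeft : M [⋀^Fin (n + 1)]→ₗ[R] N → _) := by
  intro f g hfg
  ext v
  rw [← Fin.cons_self_tail v]
  exact congr($hfg (v 0) (Fin.tail v))

end AlternatingMap

theorem IsIsotropic.subset_orthSet {q : ℕ} {L : Set (EP T q)} (h : IsIsotropic L) :
    L ⊆ orthSet L :=
  fun e he l hl ↦ h e he l hl

section Graph

variable {q : ℕ} (ω : T [⋀^Fin (q+2)]→ₗ[ℝ] ℝ)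

def formGraph : Set (EP T q) :=
  {e | ∃ X : T, e = (X, -(ω.curryLeft X))}

theorem pairing_formGraph (Y : T) (β : T [⋀^Fin (q+1)]→ₗ[ℝ] ℝ) (X : T) :
    pairing (Y, β) (X, -(ω.curryLeft X)) = (β + ω.curryLeft Y).curryLeft X := by
  simp only [pairing, AlternatingMap.curryLeft_neg, AlternatingMap.curryLeft_add,
    LinearMap.add_apply, LinearMap.neg_apply, ω.curryLeft_curryLeft_swap X Y, neg_neg, add_comm]

theorem isIsotropic_formGraph : IsIsotropic (formGraph ω) := by
  rintro _ ⟨Y, rfl⟩ _ ⟨X, rfl⟩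
  rw [pairing_formGraph, neg_add_cancel, AlternatingMap.curryLeft_zero, LinearMap.zero_apply]

theorem orthSet_formGraph_subset : orthSet (formGraph ω) ⊆ formGraph ω := by
  rintro ⟨Y, β⟩ hβ
  refine ⟨Y, Prod.ext rfl (eq_neg_of_add_eq_zero_left ?_)⟩
  refine AlternatingMap.curryLeft_injective (LinearMap.ext fun X ↦ ?_)
  rw [AlternatingMap.curryLeft_zero, LinearMap.zero_apply, ← pairing_formGraph]
  exact hβ _ ⟨X, rfl⟩

theorem orthSet_formGraph : orthSet (formGraph ω) = formGraph ω :=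
  (orthSet_formGraph_subset ω).antisymm (isIsotropic_formGraph ω).subset_orthSet

end Graph

theorem stmt7_general (q : ℕ)
    (ω : T [⋀^Fin (q+2)]→ₗ[ℝ] ℝ) :
    ({e : EP T q | ∃ X : T, e = (X, -(ω.curryLeft X))} =
      orthSet {e : EP T q | ∃ X : T, e = (X, -(ω.curryLeft X))}) ∧
    IsIsotropic {e : EP T q | ∃ X : T, e = (X, -(ω.curryLeft X))} :=
  ⟨(orthSet_formGraph ω).symm, isIsotropic_formGraph ω⟩

theorem stmt7 [FiniteDimensional ℝ T] (q : ℕ) (hq : q + 1 ≤ finrank ℝ T)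
    (ω : T [⋀^Fin (q+2)]→ₗ[ℝ] ℝ) :
    ({e : EP T q | ∃ X : T, e = (X, -(ω.curryLeft X))} =
      orthSet {e : EP T q | ∃ X : T, e = (X, -(ω.curryLeft X))}) ∧
    IsIsotropic {e : EP T q | ∃ X : T, e = (X, -(ω.curryLeft X))} :=
  stmt7_general q ω
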